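/- Let Q = T[H_1, …, H_t] be a strong semicomplete composition with |V(H_i)| ≥ 2 for each i ∈ [t]. Then Q contains an acyclic spanning subdigraph R with a source x and a sink y such that for each vertex z of Q, R contains a directed path from x to z and a directed path from z to y. -/

import Mathlib

/-- A digraph on vertex type `V`: an arbitrary set of arcs (ordered pairs). -/
structure Digr (V : Type*) where
  Adj : V → V → Prop

namespace Digr

variable {V : Type*}

/-- A digraph is strong if every vertex can reach every other vertex by a directed path. -/
def IsStrong (D : Digr V) : Prop := ∀ x y : V, Relation.ReflTransGen D.Adj x y

/-- A digraph is semicomplete if there is at least one arc between any two distinct vertices. -/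
def IsSemicomplete (D : Digr V) : Prop := ∀ x y : V, x ≠ y → (D.Adj x y ∨ D.Adj y x)

/-- The digraph obtained by deleting a set `S` of vertices. -/
def del (D : Digr V) (S : Set V) : Digr {v : V // v ∉ S} :=
  ⟨fun x y => D.Adj x.1 y.1⟩

/-- `S` is a separator of `D` if `D - S` is not strong. -/
def IsSeparator (D : Digr V) (S : Set V) : Prop := ¬ (D.del S).IsStrong

/-- A separator is minimal if no proper subset of it is a separator. -/
def IsMinimalSeparator (D : Digr V) (S : Set V) : Prop :=
  D.IsSeparator S ∧ ∀ S' : Set V, S' ⊂ S → ¬ D.IsSeparator S'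

/-- A digraph is `k`-strong-connected if every separator has at least `k` vertices. -/
def IsKStrong (D : Digr V) (k : ℕ) : Prop := ∀ S : Set V, D.IsSeparator S → k ≤ S.ncard

/-- The complement of the underlying undirected graph of a digraph. -/
def complG (D : Digr V) : SimpleGraph V where
  Adj x y := x ≠ y ∧ ¬ D.Adj x y ∧ ¬ D.Adj y x
  symm := ⟨fun x y h => ⟨Ne.symm h.1, h.2.2, h.2.1⟩⟩
  loopless := ⟨fun x h => h.1 rfl⟩

/-- `s` is the vertex set of a connected component of the complement of the
underlying undirected graph of `D`. -/
def IsComplComponent (D : Digr V) (s : Set V) : Prop :=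
  s.Nonempty ∧ (∀ x ∈ s, ∀ y ∈ s, D.complG.Reachable x y) ∧
    (∀ x ∈ s, ∀ y : V, D.complG.Reachable x y → y ∈ s)

/-- A (directed) path, given as its list of vertices. -/
def IsPathList (D : Digr V) (l : List V) : Prop :=
  l ≠ [] ∧ l.Nodup ∧ l.Chain' D.Adj

/-- A (directed) cycle, given as its list of vertices. -/
def IsCycleList (D : Digr V) (l : List V) : Prop :=
  2 ≤ l.length ∧ l.Nodup ∧ (l ++ l.take 1).Chain' D.Adj

/-- A Hamiltonian (directed) path. -/
def HasHamPath (D : Digr V) : Prop := ∃ l : List V, D.IsPathList l ∧ ∀ v : V, v ∈ l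

/-- A Hamiltonian (directed) cycle. -/
def HasHamCycle (D : Digr V) : Prop := ∃ l : List V, D.IsCycleList l ∧ ∀ v : V, v ∈ l

/-- A `k`-path subdigraph: `k` pairwise vertex-disjoint directed paths. -/
def IsKPathSub (D : Digr V) (k : ℕ) (P : Fin k → List V) : Prop :=
  (∀ j, D.IsPathList (P j)) ∧ ∀ j j' : Fin k, j ≠ j' → ∀ v : V, v ∈ P j → v ∉ P j'

/-- A cycle subdigraph: a collection of pairwise vertex-disjoint directed cycles. -/
def IsCycleSub (D : Digr V) (c : ℕ) (C : Fin c → List V) : Prop :=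
  (∀ j, D.IsCycleList (C j)) ∧ ∀ j j' : Fin c, j ≠ j' → ∀ v : V, v ∈ C j → v ∉ C j'

/-- The set of vertices covered by a family of paths/cycles. -/
def lverts {k : ℕ} (P : Fin k → List V) : Set V := {v : V | ∃ j, v ∈ P j}

/-- A maximum `k`-path subdigraph: one covering the largest number of vertices. -/
def IsMaxKPathSub (D : Digr V) (k : ℕ) (P : Fin k → List V) : Prop :=
  D.IsKPathSub k P ∧
    ∀ P' : Fin k → List V, D.IsKPathSub k P' → (lverts P').ncard ≤ (lverts P).ncard

/-- The path covering number: the least `k` such that `D` has a spanning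
collection of `k` pairwise disjoint directed paths. -/
noncomputable def pc (D : Digr V) : ℕ :=
  sInf {k : ℕ | ∃ P : Fin k → List V, D.IsKPathSub k P ∧ ∀ v : V, ∃ j, v ∈ P j}

/-- A digraph is acyclic if it has no (nontrivial) closed directed walk. -/
def IsAcyclic (D : Digr V) : Prop := ∀ v : V, ¬ Relation.TransGen D.Adj v v

/-- `D'` is a spanning subdigraph of `D` (same vertex set, a subset of the arcs). -/
def IsSpanningSubdigraph (D' D : Digr V) : Prop := ∀ x y : V, D'.Adj x y → D.Adj x y

/-- The number of arcs of a digraph. -/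
noncomputable def arcCount (D : Digr V) : ℕ := {p : V × V | D.Adj p.1 p.2}.ncard

/-- The composition `T[H 0, …, H (t-1)]` of digraphs. -/
def comp {t : ℕ} (T : Digr (Fin t)) {β : Fin t → Type*} (H : ∀ i, Digr (β i)) :
    Digr ((i : Fin t) × β i) :=
  ⟨fun x y => (∃ h : x.1 = y.1, (H y.1).Adj (h ▸ x.2) y.2) ∨ (x.1 ≠ y.1 ∧ T.Adj x.1 y.1)⟩

/-- The digraph `H_k(D)`: add vertices `x_1, …, x_k` (the left summand of `Fin k ⊕ Fin k`)
and `y_1, …, y_k` (the right summand), all arcs from `V(D)` to each `x_i`, from each `y_j`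
to `V(D)`, and all arcs `x_i y_j`. -/
def HkD (D : Digr V) (k : ℕ) : Digr (V ⊕ (Fin k ⊕ Fin k)) :=
  ⟨fun x y =>
    match x, y with
    | Sum.inl a, Sum.inl b => D.Adj a b
    | Sum.inl _, Sum.inr (Sum.inl _) => True
    | Sum.inr (Sum.inr _), Sum.inl _ => True
    | Sum.inr (Sum.inl _), Sum.inr (Sum.inr _) => True
    | _, _ => False⟩

/-- `ε(D)`: the least `k` such that `H_k(D)` is Hamiltonian. -/
noncomputable def eps (D : Digr V) : ℕ := sInf {k : ℕ | (D.HkD k).HasHamCycle}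

/-- Membership in the class `𝒯₁`: some vertex `u` has arcs in both directions
to every other vertex. -/
def memT1 {t : ℕ} (T : Digr (Fin t)) : Prop :=
  ∃ u : Fin t, ∀ v : Fin t, v ≠ u → T.Adj u v ∧ T.Adj v u

/-- `A ⇒ B`: every vertex of `A` dominates every vertex of `B`,
and there is no arc from `B` to `A`. -/
def DomStrict (D : Digr V) (A B : Set V) : Prop :=
  (∀ a ∈ A, ∀ b ∈ B, D.Adj a b) ∧ (∀ b ∈ B, ∀ a ∈ A, ¬ D.Adj b a)

/-- `s` is an independent set: the induced subdigraph has no arcs. -/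
def IndepSet (D : Digr V) (s : Set V) : Prop := ∀ a ∈ s, ∀ b ∈ s, ¬ D.Adj a b

/-- The induced subdigraph on `s` contains a directed path of length 2. -/
def HasP2In (D : Digr V) (s : Set V) : Prop :=
  ∃ a ∈ s, ∃ b ∈ s, ∃ c ∈ s, a ≠ b ∧ b ≠ c ∧ a ≠ c ∧ D.Adj a b ∧ D.Adj b c

/-- A digraph on `n` vertices is pancyclic if it has a cycle of every length
`k` with `3 ≤ k ≤ n`. -/
def Pancyclic [Fintype V] (D : Digr V) : Prop :=
  ∀ m : ℕ, 3 ≤ m → m ≤ Fintype.card V →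
    ∃ l : List V, D.IsCycleList l ∧ l.length = m

/-- `D` has an out-branching: a spanning out-tree. -/
def HasOutBranching (D : Digr V) : Prop :=
  ∃ (B : Digr V) (r : V), B.IsSpanningSubdigraph D ∧
    (∀ v : V, Relation.ReflTransGen B.Adj r v) ∧
    (∀ z : V, ¬ B.Adj z r) ∧ (∀ v : V, v ≠ r → ∃! u : V, B.Adj u v)

/-- `D` has an in-branching: a spanning in-tree. -/
def HasInBranching (D : Digr V) : Prop :=
  ∃ (B : Digr V) (r : V), B.IsSpanningSubdigraph D ∧
    (∀ v : V, Relation.ReflTransGen B.Adj v r) ∧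
    (∀ z : V, ¬ B.Adj r z) ∧ (∀ v : V, v ≠ r → ∃! u : V, B.Adj v u)

end Digr

section AuxChain
variable {α : Type*} {r : α → α → Prop}

lemma exists_nodup_chain' {a b : α} (h : Relation.ReflTransGen r a b) :
    ∃ l : List α, l.Chain' r ∧ l.Nodup ∧ l.head? = some a ∧ l.getLast? = some b := by
  induction h with
  | refl => exact ⟨[a], List.isChain_singleton a, by simp, rfl, rfl⟩
  | @tail b c hab hbc ih =>
    obtain ⟨l, hc, hnd, hh, hl⟩ := ih
    by_cases hmem : c ∈ l
    · obtain ⟨s, u, rfl⟩ := List.append_of_mem hmem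
      refine ⟨s ++ [c], ?_, ?_, ?_, ?_⟩
      · exact hc.prefix ⟨u, by simp⟩
      · exact List.Nodup.sublist (by simpa using List.sublist_append_left (s ++ [c]) u) hnd
      · cases s with
        | nil =>
          simp only [List.nil_append, List.head?_cons] at hh ⊢
          exact hh
        | cons hd tl => simpa using (by simpa using hh)
      · simp
    · refine ⟨l ++ [c], ?_, ?_, ?_, ?_⟩
      · rw [List.Chain', List.isChain_append]
        refine ⟨hc, by simp, ?_⟩
        intro x hx y hy
        simp only [List.head?_cons, Option.mem_def, Option.some.injEq] at hy
        rw [hl] at hx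
        simp only [Option.mem_def, Option.some.injEq] at hx
        subst hx; subst hy; exact hbc
      · simp [List.nodup_append, hnd, hmem]; exact fun x hx h => hmem (h ▸ hx)
      · cases l with
        | nil => simp at hh
        | cons hd tl => simpa using (by simpa using hh)
      · simp

lemma crossing' {Pr : α → Prop} {a b : α} (h : Relation.ReflTransGen r a b) :
    Pr a → ¬ Pr b → ∃ x y, Pr x ∧ ¬ Pr y ∧ r x y := by
  induction h using Relation.ReflTransGen.head_induction_on with
  | refl => intro ha hb; exact absurd ha hb
  | @head u c huc hcb ih =>
    intro ha hb
    by_cases hc : Pr c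
    · exact ih hc hb
    · exact ⟨u, c, ha, hc, huc⟩

/-- A cycle list: nodup, length ≥ 2, arcs along the list and wrap-around. -/
def Cy (r : α → α → Prop) (l : List α) : Prop :=
  l.Nodup ∧ 2 ≤ l.length ∧ List.Chain' r (l ++ l.take 1)

lemma cy_chain_iff {l : List α} (hlen : 1 ≤ l.length) :
    List.Chain' r (l ++ l.take 1) ↔
      ∀ j (hj : j < l.length),
        r (l.get ⟨j, hj⟩) (l.get ⟨(j+1) % l.length, Nat.mod_lt _ (by omega)⟩) := by
  set n := l.length with hn
  have hm : (l ++ l.take 1).length = n + 1 := by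
    simp [List.length_take]; omega
  have hget : ∀ (i : ℕ) (h : i < n + 1),
      (l ++ l.take 1).get ⟨i, by omega⟩ = l.get ⟨i % n, Nat.mod_lt _ (by omega)⟩ := by
    intro i h
    simp only [List.get_eq_getElem]
    rcases Nat.lt_or_ge i n with hi | hi
    · rw [List.getElem_append_left (by omega)]
      congr 1
      exact (Nat.mod_eq_of_lt hi).symm
    · have hi' : i = n := by omega
      subst hi'
      rw [List.getElem_append_right (by omega)]
      simp [Nat.mod_self, hn]
  rw [List.Chain', List.isChain_iff_getElem]
  constructor
  · intro h j hj
    have := h j (by omega)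
    have e1 := hget j (by omega)
    have e2 := hget (j+1) (by omega)
    simp only [List.get_eq_getElem] at e1 e2 ⊢
    rw [e1, e2] at this
    simpa [Nat.mod_eq_of_lt hj, hn] using this
  · intro h i hi
    rw [hm] at hi
    have e1 := hget i (by omega)
    have e2 := hget (i+1) (by omega)
    simp only [List.get_eq_getElem] at e1 e2 h
    rw [e1, e2]
    have := h i (by omega)
    simpa [Nat.mod_eq_of_lt (show i < l.length by omega), hn] using this

lemma cy_ofFn {n : ℕ} (hn : 2 ≤ n) (h : ℕ → α)
    (hinj : ∀ j j', j < n → j' < n → h j = h j' → j = j')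
    (hadj : ∀ j, j < n → r (h j) (h ((j+1) % n))) :
    Cy r (List.ofFn (fun i : Fin n => h i)) ∧
      (List.ofFn (fun i : Fin n => h i)).length = n ∧
      (∀ v, v ∈ List.ofFn (fun i : Fin n => h i) ↔ ∃ j, j < n ∧ v = h j) := by
  set l := List.ofFn (fun i : Fin n => h i) with hl
  have hlen : l.length = n := by simp [hl]
  have hgetl : ∀ (j : ℕ) (hj : j < l.length), l.get ⟨j, hj⟩ = h j := by
    intro j hj
    simp [hl, List.get_ofFn]
  refine ⟨⟨?_, by omega, ?_⟩, hlen, ?_⟩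
  · rw [hl, List.nodup_ofFn]
    intro a b hab
    exact Fin.ext (hinj _ _ a.2 b.2 (by simpa using hab))
  · rw [cy_chain_iff (by omega)]
    intro j hj
    rw [hgetl, hgetl]
    rw [hlen]
    exact hadj j (by omega)
  · intro v
    simp only [hl, List.mem_ofFn, Set.mem_range]
    constructor
    · rintro ⟨i, rfl⟩; exact ⟨i, i.2, rfl⟩
    · rintro ⟨j, hj, rfl⟩; exact ⟨⟨j, hj⟩, rfl⟩

/-- The cyclic accessor of a cycle list. -/
noncomputable def cyg (l : List α) (hl : l ≠ []) : ℕ → α :=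
  fun j => l.get ⟨j % l.length, Nat.mod_lt _ (List.length_pos_iff.2 hl)⟩

lemma cy_facts {l : List α} (hcy : Cy r l) :
    ∃ hne : l ≠ [],
      (∀ j, r (cyg l hne j) (cyg l hne (j+1))) ∧
      (∀ j, cyg l hne j ∈ l) ∧
      (∀ a, a ∈ l → ∃ j, j < l.length ∧ a = cyg l hne j) ∧
      (∀ j j', j < l.length → j' < l.length → cyg l hne j = cyg l hne j' → j = j') ∧
      (∀ j j', j % l.length = j' % l.length → cyg l hne j = cyg l hne j') := by
  obtain ⟨hnd, hlen, hch⟩ := hcy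
  have hne : l ≠ [] := by intro h; simp [h] at hlen
  have hn : 1 ≤ l.length := by omega
  refine ⟨hne, ?_, ?_, ?_, ?_, ?_⟩
  · intro j
    have := (cy_chain_iff hn).1 hch (j % l.length) (Nat.mod_lt _ (by omega))
    unfold cyg
    have hmod : (j % l.length + 1) % l.length = (j + 1) % l.length := by
      conv_rhs => rw [Nat.add_mod]
      rw [Nat.mod_eq_of_lt (show 1 < l.length by omega)]
    convert this using 3
    exact hmod.symm
  · intro j; exact l.get_mem _
  · intro a ha
    obtain ⟨i, hi⟩ := List.mem_iff_get.1 ha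
    exact ⟨i, i.2, by unfold cyg; rw [← hi]; congr 1; exact Fin.ext (by simp [Nat.mod_eq_of_lt i.2])⟩
  · intro j j' hj hj' he
    unfold cyg at he
    have := List.Nodup.get_inj_iff hnd |>.1 he
    simpa [Nat.mod_eq_of_lt hj, Nat.mod_eq_of_lt hj'] using Fin.val_eq_val _ _ |>.2 this
  · intro j j' he
    unfold cyg
    congr 1
    exact Fin.ext he

lemma cy_extend (hsemi : ∀ a b : α, a ≠ b → r a b ∨ r b a)
    (hstr : ∀ a b : α, Relation.ReflTransGen r a b)
    {l : List α} (hcy : Cy r l) {v : α} (hv : v ∉ l) :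
    ∃ l', Cy r l' ∧ l.length < l'.length := by
  obtain ⟨hne, gadj, gmem, gsurj, ginj, gcong⟩ := cy_facts hcy
  set n := l.length with hn
  have hn2 : 2 ≤ n := hcy.2.1
  set g := cyg l hne with hg
  have gper : ∀ j, g (j + n) = g j := fun j => gcong _ _ (Nat.add_mod_right j n)
  have gmodeq : ∀ k, g (k % n) = g k := fun k => gcong _ _ (Nat.mod_mod_of_dvd k dvd_rfl)
  have gshift : ∀ k, g (k % n + 1) = g (k + 1) := by
    intro k
    apply gcong
    rw [Nat.add_mod (k % n), Nat.add_mod k, Nat.mod_mod_of_dvd k dvd_rfl]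
  by_cases hins : ∃ u, u ∉ l ∧ ∃ k, k < n ∧ r (g k) u ∧ r u (g (k+1))
  · obtain ⟨u, hu, k, hk, hgu, hug⟩ := hins
    set h : ℕ → α := fun j => if j ≤ k then g j else if j = k+1 then u else g (j-1) with hh
    have gne_u : ∀ m, g m ≠ u := fun m he => hv (by exact absurd (he ▸ gmem m) hu) |>.elim
    have f1 : ∀ j, j ≤ k → h j = g j := by intro j hj; simp [hh, hj]
    have f2 : h (k+1) = u := by simp [hh]
    have f3 : ∀ j, k+1 < j → h j = g (j-1) := by
      intro j hj
      simp only [hh]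
      rw [if_neg (by omega), if_neg (by omega)]
    have hinj : ∀ j j', j < n+1 → j' < n+1 → h j = h j' → j = j' := by
      intro j j' hj hj' he
      rcases Nat.lt_or_ge k j with h3 | h3 <;> rcases Nat.lt_or_ge k j' with h4 | h4
      · -- j > k, j' > k
        rcases Nat.eq_or_lt_of_le h3 with h5 | h5 <;> rcases Nat.eq_or_lt_of_le h4 with h6 | h6
        · omega
        · rw [f3 j' (by omega), ← h5, f2] at he
          exact absurd he.symm (gne_u _)
        · rw [f3 j (by omega), ← h6, f2] at he
          exact absurd he (gne_u _)
        · rw [f3 j (by omega), f3 j' (by omega)] at he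
          have := ginj _ _ (by omega) (by omega) he
          omega
      · rcases Nat.eq_or_lt_of_le h3 with h5 | h5
        · rw [← h5, f2, f1 j' h4] at he
          exact absurd he.symm (gne_u _)
        · rw [f3 j (by omega), f1 j' h4] at he
          have := ginj _ _ (by omega) (by omega) he
          omega
      · rcases Nat.eq_or_lt_of_le h4 with h5 | h5
        · rw [← h5, f2, f1 j h3] at he
          exact absurd he (gne_u _)
        · rw [f3 j' (by omega), f1 j h3] at he
          have := ginj _ _ (by omega) (by omega) he
          omega
      · rw [f1 j h3, f1 j' h4] at he
        exact ginj _ _ (by omega) (by omega) he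
    have hadj : ∀ j, j < n+1 → r (h j) (h ((j+1) % (n+1))) := by
      intro j hj
      rcases Nat.lt_or_ge j k with h1 | h1
      · rw [Nat.mod_eq_of_lt (by omega), f1 j (by omega), f1 (j+1) (by omega)]
        exact gadj j
      rcases Nat.eq_or_lt_of_le h1 with h2 | h2
      · rw [Nat.mod_eq_of_lt (by omega), ← h2, f1 k le_rfl, f2]
        exact hgu
      rcases Nat.eq_or_lt_of_le (Nat.succ_le_of_lt h2) with h3 | h3
      · -- j = k+1
        rcases Nat.lt_or_ge (j+1) (n+1) with h4 | h4
        · rw [Nat.mod_eq_of_lt h4, ← h3, f2, f3 (k+2) (by omega)]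
          simpa using hug
        · -- j = n, k+1 = n
          have hj' : j = n := by omega
          have hk' : k + 1 = n := by omega
          rw [hj', Nat.mod_self, f1 0 (by omega), ← hk', f2]
          have : g (k+1) = g 0 := by rw [hk']; have := gper 0; simpa using this
          rwa [this] at hug
      · -- j > k+1
        rcases Nat.lt_or_ge (j+1) (n+1) with h4 | h4
        · rw [Nat.mod_eq_of_lt h4, f3 j (by omega), f3 (j+1) (by omega)]
          have := gadj (j-1)
          have hj1 : j - 1 + 1 = j := by omega
          rw [hj1] at this
          simpa using this
        · have hj' : j = n := by omega
          rw [hj', Nat.mod_self, f1 0 (by omega), f3 n (by omega)]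
          have := gadj (n-1)
          have hj1 : n - 1 + 1 = n := by omega
          rw [hj1] at this
          have h0 : g n = g 0 := by have := gper 0; simpa using this
          rwa [h0] at this
    obtain ⟨hcy', hlen', -⟩ := cy_ofFn (r := r) (by omega) h hinj hadj
    exact ⟨_, hcy', by omega⟩
  · push_neg at hins
    have hnins : ∀ u, u ∉ l → ∀ k, r (g k) u → ¬ r u (g (k+1)) := by
      intro u hu k h1 h2
      have := hins u hu (k % n) (Nat.mod_lt _ (by omega))
      rw [gmodeq k, gshift k] at this
      exact this h1 h2
    have tp_or_sp : ∀ u, u ∉ l →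
        (∀ j, r (g j) u ∧ ¬ r u (g j)) ∨ (∀ j, ¬ r (g j) u ∧ r u (g j)) := by
      intro u hu
      have hne_g : ∀ j, u ≠ g j := fun j he => hu (he ▸ gmem j)
      by_cases hex : ∃ k, r (g k) u
      · left
        obtain ⟨k0, hk0⟩ := hex
        have prop : ∀ m, r (g (k0 + m)) u := by
          intro m
          induction m with
          | zero => simpa using hk0
          | succ p ih =>
            have hno : ¬ r u (g (k0+p+1)) := fun hr => hnins u hu (k0+p) ih hr
            rcases hsemi u (g (k0+p+1)) (hne_g _) with h | h
            · exact absurd h hno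
            · have : k0 + (p+1) = k0 + p + 1 := by omega
              rwa [this]
        have hall_in : ∀ j, r (g j) u := by
          intro j
          have h1 := prop (n * (k0+1) - k0 + j)
          have he : g (k0 + (n*(k0+1) - k0 + j)) = g j := by
            apply gcong
            have h2 : k0 + (n*(k0+1) - k0 + j) = n*(k0+1) + j := by
              have : k0 ≤ n * (k0+1) := by nlinarith
              omega
            rw [h2, Nat.mul_add_mod]
          rwa [he] at h1
        intro j
        refine ⟨hall_in j, fun hr => ?_⟩
        have hg1 : g (j + n - 1 + 1) = g j := by
          have h2 : j + n - 1 + 1 = j + n := by omega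
          rw [h2, gper]
        exact hnins u hu (j + n - 1) (hall_in _) (by rwa [hg1])
      · right
        push_neg at hex
        intro j
        refine ⟨hex j, ?_⟩
        rcases hsemi (g j) u (Ne.symm (hne_g j)) with h | h
        · exact absurd h (hex j)
        · exact h
    -- find a T-type vertex
    have hT : ∃ a, a ∉ l ∧ (∀ j, r (g j) a ∧ ¬ r a (g j)) := by
      obtain ⟨p, q, hp, hq, hpq⟩ := crossing' (Pr := fun w => w ∈ l) (hstr (g 0) v) (gmem 0) hv
      rcases tp_or_sp q hq with h | h
      · exact ⟨q, hq, h⟩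
      · obtain ⟨jp, hjp, rfl⟩ := gsurj p hp
        exact absurd hpq (h jp).1
    obtain ⟨a, hal, ha⟩ := hT
    -- find an arc from a T-type vertex to an S-type vertex
    obtain ⟨p, q, hp, hq, hpq⟩ := crossing'
      (Pr := fun w => w ∉ l ∧ ∀ j, r (g j) w ∧ ¬ r w (g j))
      (hstr a (g 0)) ⟨hal, ha⟩ (fun hc => hc.1 (gmem 0))
    have hql : q ∉ l := by
      intro hql
      obtain ⟨jq, hjq, rfl⟩ := gsurj q hql
      exact (hp.2 jq).2 hpq
    have hqS : ∀ j, ¬ r (g j) q ∧ r q (g j) := by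
      rcases tp_or_sp q hql with h | h
      · exact absurd ⟨hql, h⟩ hq
      · exact h
    have hpq_ne : p ≠ q := by
      intro he
      exact (hqS 0).1 (he ▸ (hp.2 0).1)
    -- build the longer cycle of length n + 2
    set h : ℕ → α := fun j => if j < n then g j else if j = n then p else q with hh
    have f1 : ∀ j, j < n → h j = g j := by intro j hj; simp [hh, hj]
    have f2 : h n = p := by simp [hh]
    have f3 : h (n+1) = q := by
      simp only [hh]
      rw [if_neg (by omega), if_neg (by omega)]
    have hpl : p ∉ l := hp.1
    have hinj : ∀ j j', j < n+2 → j' < n+2 → h j = h j' → j = j' := by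
      intro j j' hj hj' he
      rcases Nat.lt_or_ge j n with h1 | h1 <;> rcases Nat.lt_or_ge j' n with h2 | h2
      · rw [f1 j h1, f1 j' h2] at he; exact ginj _ _ h1 h2 he
      · rcases (by omega : j' = n ∨ j' = n + 1) with h3 | h3 <;> subst h3
        · rw [f1 j h1, f2] at he; exact absurd (he ▸ gmem j) hpl
        · rw [f1 j h1, f3] at he; exact absurd (he ▸ gmem j) hql
      · rcases (by omega : j = n ∨ j = n + 1) with h3 | h3 <;> subst h3
        · rw [f1 j' h2, f2] at he; exact absurd (he.symm ▸ gmem j') hpl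
        · rw [f1 j' h2, f3] at he; exact absurd (he.symm ▸ gmem j') hql
      · rcases (by omega : j = n ∨ j = n + 1) with h3 | h3 <;>
          rcases (by omega : j' = n ∨ j' = n + 1) with h4 | h4 <;> subst h3 <;> subst h4
        · rfl
        · rw [f2, f3] at he; exact absurd he hpq_ne
        · rw [f2, f3] at he; exact absurd he.symm hpq_ne
        · rfl
    have hadj : ∀ j, j < n+2 → r (h j) (h ((j+1) % (n+2))) := by
      intro j hj
      rcases Nat.lt_or_ge (j+1) n with h1 | h1
      · rw [Nat.mod_eq_of_lt (by omega), f1 j (by omega), f1 (j+1) h1]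
        exact gadj j
      rcases (by omega : j = n - 1 ∨ j = n ∨ j = n + 1) with h2 | h2 | h2 <;> subst h2
      · rw [Nat.mod_eq_of_lt (by omega), f1 (n-1) (by omega)]
        have h3 : n - 1 + 1 = n := by omega
        rw [h3, f2]
        exact (hp.2 (n-1)).1
      · rw [Nat.mod_eq_of_lt (by omega), f2, f3]
        exact hpq
      · have h3 : (n + 1 + 1) % (n + 2) = 0 := by rw [show n+1+1 = n+2 from rfl, Nat.mod_self]
        rw [h3, f3, f1 0 (by omega)]
        exact (hqS 0).2
    obtain ⟨hcy', hlen', -⟩ := cy_ofFn (r := r) (by omega) h hinj hadj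
    exact ⟨_, hcy', by omega⟩

lemma camion [Fintype α] [DecidableEq α]
    (hsemi : ∀ a b : α, a ≠ b → r a b ∨ r b a)
    (hstr : ∀ a b : α, Relation.ReflTransGen r a b)
    (hcard : ∃ a b : α, a ≠ b) :
    ∃ l : List α, Cy r l ∧ ∀ v : α, v ∈ l := by
  have hex : ∃ l, Cy r l := by
    have hab' : ∃ a b : α, a ≠ b ∧ r a b := by
      obtain ⟨a, b, hab⟩ := hcard
      rcases hsemi a b hab with h | h
      · exact ⟨a, b, hab, h⟩
      · exact ⟨b, a, hab.symm, h⟩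
    obtain ⟨a, b, hab, hr⟩ := hab'
    obtain ⟨p, hchain, hnd, hh, hl⟩ := exists_nodup_chain' (hstr b a)
    have hpne : p ≠ [] := by intro h; subst h; simp at hh
    have hhead : p.head hpne = b := by
      rw [List.head?_eq_head hpne] at hh
      exact Option.some_injective _ hh
    have hlast : p.getLast hpne = a := by
      rw [List.getLast?_eq_getLast hpne] at hl
      exact Option.some_injective _ hl
    have hlen2 : 2 ≤ p.length := by
      rcases p with _ | ⟨x, _ | ⟨z, tl⟩⟩
      · simp at hpne
      · exfalso
        simp only [List.head_cons] at hhead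
        simp only [List.getLast_singleton] at hlast
        exact hab (hlast ▸ hhead ▸ rfl)
      · simp
    refine ⟨p, hnd, hlen2, ?_⟩
    rw [cy_chain_iff (by omega)]
    intro j hj
    rcases Nat.lt_or_ge (j+1) p.length with h1 | h1
    · have := List.isChain_iff_getElem.1 hchain j h1
      simp only [List.get_eq_getElem]
      convert this using 2
      exact Nat.mod_eq_of_lt h1
    · have hj' : j = p.length - 1 := by omega
      subst hj'
      have h2 : (p.length - 1 + 1) % p.length = 0 := by
        have : p.length - 1 + 1 = p.length := by omega
        rw [this, Nat.mod_self]
      have h3 : p.get ⟨p.length - 1, by omega⟩ = a := by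
        rw [← hlast, List.getLast_eq_getElem, List.get_eq_getElem]
      have h4 : p.get ⟨(p.length - 1 + 1) % p.length, by apply Nat.mod_lt; omega⟩ =
          p.get ⟨0, by omega⟩ := by congr 1; exact Fin.ext h2
      rw [h3, h4]
      have h5 : p.get ⟨0, by omega⟩ = b := by
        rw [← hhead, List.get_mk_zero]
      rw [h5]
      exact hr
  set Lens := {m : ℕ | ∃ l, Cy r l ∧ l.length = m} with hLens
  have hne : Lens.Nonempty := by
    obtain ⟨l, hl⟩ := hex
    exact ⟨l.length, l, hl, rfl⟩
  have hbdd : BddAbove Lens := by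
    refine ⟨Fintype.card α, ?_⟩
    rintro m ⟨l, hl, rfl⟩
    exact hl.1.length_le_card
  obtain ⟨l, hl, hlen⟩ := Nat.sSup_mem hne hbdd
  refine ⟨l, hl, fun v => ?_⟩
  by_contra hv
  obtain ⟨l', hl', hlt⟩ := cy_extend hsemi hstr hl hv
  have hmem : l'.length ∈ Lens := ⟨l', hl', rfl⟩
  have := le_csSup hbdd hmem
  omega

end AuxChain


/-- A strong semicomplete composition with `|V(H_i)| ≥ 2` for all `i`
contains an acyclic spanning subdigraph `R` with a source `x` and a sink `y` such that
`R` contains an `x → z` path and a `z → y` path for every vertex `z`. -/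
theorem stmt_16 {t : ℕ} (ht : 2 ≤ t) (T : Digr (Fin t)) {β : Fin t → Type*}
    [∀ i, Nonempty (β i)] [∀ i, Fintype (β i)] (H : ∀ i, Digr (β i))
    (hsemi : T.IsSemicomplete) (hstrong : (Digr.comp T H).IsStrong)
    (hsize : ∀ i, 2 ≤ Fintype.card (β i)) :
    ∃ (R : Digr ((i : Fin t) × β i)) (x y : (i : Fin t) × β i),
      R.IsSpanningSubdigraph (Digr.comp T H) ∧ R.IsAcyclic ∧
      (∀ z : (i : Fin t) × β i, ¬ R.Adj z x) ∧
      (∀ z : (i : Fin t) × β i, ¬ R.Adj y z) ∧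
      (∀ z : (i : Fin t) × β i,
        Relation.ReflTransGen R.Adj x z ∧ Relation.ReflTransGen R.Adj z y) := by
  classical
  -- choose two distinct vertices in each part
  have hcd' : ∀ i, ∃ a b : β i, a ≠ b := fun i =>
    Fintype.exists_pair_of_one_lt_card (by have := hsize i; omega)
  choose c d hcd using hcd'
  -- T is strong
  have hT : ∀ i p : Fin t, Relation.ReflTransGen T.Adj i p := by
    intro i p
    have a : β i := Classical.arbitrary _
    have b : β p := Classical.arbitrary _
    have h := hstrong ⟨i, a⟩ ⟨p, b⟩
    have proj : ∀ (u w : (i : Fin t) × β i),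
        Relation.ReflTransGen (Digr.comp T H).Adj u w →
        Relation.ReflTransGen T.Adj u.1 w.1 := by
      intro u w h
      induction h with
      | refl => exact .refl
      | tail _ h2 ih =>
        rcases h2 with ⟨heq, _⟩ | ⟨_, hadj⟩
        · rwa [← heq]
        · exact ih.tail hadj
    exact proj _ _ h
  -- Hamiltonian cycle of T
  have htne : ∃ i p : Fin t, i ≠ p :=
    ⟨⟨0, by omega⟩, ⟨1, by omega⟩, by simp [Fin.ext_iff]⟩
  obtain ⟨L, hLcy, hLall⟩ := camion hsemi hT htne
  obtain ⟨hne, gadj, gmem, gsurj, ginj, gcong⟩ := cy_facts hLcy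
  set n := L.length with hndef
  have hn2 : 2 ≤ n := hLcy.2.1
  set g := cyg L hne with hgdef
  have gper : ∀ j, g (j + n) = g j := fun j => gcong _ _ (Nat.add_mod_right j n)
  -- index of a part on the cycle
  set idx : Fin t → ℕ := fun i => L.idxOf i with hidxdef
  have hidx : ∀ i, idx i < n := fun i => List.idxOf_lt_length_iff.2 (hLall i)
  have hgidx : ∀ i : Fin t, g (idx i) = i := by
    intro i
    show cyg L hne (idx i) = i
    unfold cyg
    have h1 : idx i % n = idx i := Nat.mod_eq_of_lt (hidx i)
    have h2 : L.get ⟨idx i % n, Nat.mod_lt _ (by omega)⟩ =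
        L.get ⟨idx i, hidx i⟩ := by congr 1; exact Fin.ext h1
    rw [h2]
    exact List.idxOf_get (hidx i)
  have hidxg : ∀ k, k < n → idx (g k) = k := by
    intro k hk
    have := ginj (idx (g k)) k (hidx _) hk (hgidx (g k))
    exact this
  -- consecutive parts are distinct and adjacent
  have hconsne : ∀ k, k < n - 1 → g k ≠ g (k+1) :=
    fun k hk he => by have := ginj k (k+1) (by omega) (by omega) he; omega
  have hwrapne : g (n-1) ≠ g 0 :=
    fun he => by have := ginj (n-1) 0 (by omega) (by omega) he; omega
  have hwrapadj : T.Adj (g (n-1)) (g 0) := by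
    have h1 := gadj (n-1)
    have h2 : n - 1 + 1 = n := by omega
    rw [h2] at h1
    have h3 : g n = g 0 := by have := gper 0; simpa using this
    rwa [h3] at h1
  have arcQ : ∀ (i p : Fin t), i ≠ p → T.Adj i p → ∀ (a : β i) (b : β p),
      (Digr.comp T H).Adj ⟨i, a⟩ ⟨p, b⟩ := by
    intro i p h1 h2 a b
    exact Or.inr ⟨h1, h2⟩
  -- the rank function
  set ρ : ((i : Fin t) × β i) → ℕ := fun z =>
    if z.2 = c z.1 then (if idx z.1 = 0 then 0 else n + idx z.1)
    else (if idx z.1 = 0 then n else idx z.1) with hρdef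
  have ρeval : ∀ (i : Fin t) (a : β i), ρ ⟨i, a⟩ =
      if a = c i then (if idx i = 0 then 0 else n + idx i)
      else (if idx i = 0 then n else idx i) := fun i a => rfl
  set x : (i : Fin t) × β i := ⟨g 0, c (g 0)⟩ with hxdef
  set y : (i : Fin t) × β i := ⟨g (n-1), c (g (n-1))⟩ with hydef
  have ρx : ρ x = 0 := by
    rw [hxdef, ρeval, if_pos rfl, if_pos (hidxg 0 (by omega))]
  have ρy : ρ y = n + (n-1) := by
    rw [hydef, ρeval, if_pos rfl, hidxg (n-1) (by omega), if_neg (by omega)]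
  have ρmax : ∀ z, ρ z ≤ n + (n - 1) := by
    rintro ⟨i, a⟩
    rw [ρeval]
    have := hidx i
    split_ifs <;> omega
  -- the spanning acyclic digraph
  set R : Digr ((i : Fin t) × β i) :=
    ⟨fun a b => (Digr.comp T H).Adj a b ∧ ρ a < ρ b⟩ with hRdef
  have ρcval : ∀ m, m < n → ρ ⟨g m, c (g m)⟩ = if m = 0 then 0 else n + m := by
    intro m hm
    rw [ρeval, if_pos rfl, hidxg m hm]
  have ρdval : ∀ m, m < n → ρ ⟨g m, d (g m)⟩ = if m = 0 then n else m := by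
    intro m hm
    rw [ρeval, if_neg (fun h => hcd (g m) h.symm), hidxg m hm]
  have gne : ∀ k k', k < n → k' < n → k ≠ k' → g k ≠ g k' :=
    fun k k' hk hk' hkk he => hkk (ginj _ _ hk hk' he)
  have ρcval : ∀ m, m < n → ρ ⟨g m, c (g m)⟩ = if m = 0 then 0 else n + m := by
    intro m hm
    rw [ρeval, if_pos rfl, hidxg m hm]
  have ρdval : ∀ m, m < n → ρ ⟨g m, d (g m)⟩ = if m = 0 then n else m := by
    intro m hm
    rw [ρeval, if_neg (fun h => hcd (g m) h.symm), hidxg m hm]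
  have gne : ∀ k k', k < n → k' < n → k ≠ k' → g k ≠ g k' :=
    fun k k' hk hk' hkk he => hkk (ginj _ _ hk hk' he)
  -- in-neighbours
  have lemA : ∀ z : (i : Fin t) × β i, z ≠ x →
      ∃ w, (Digr.comp T H).Adj w z ∧ ρ w < ρ z := by
    rintro ⟨i, a⟩ hzx
    obtain ⟨k, hk, rfl⟩ : ∃ k, k < n ∧ g k = i := ⟨idx i, hidx i, hgidx i⟩
    have hik : idx (g k) = k := hidxg k hk
    by_cases hac : a = c (g k)
    · by_cases hk0 : k = 0
      · exfalso
        apply hzx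
        subst hac
        subst hk0
        rfl
      · have ρz : ρ ⟨g k, a⟩ = n + k := by
          rw [ρeval, if_pos hac, hik, if_neg hk0]
        refine ⟨⟨g (k - 1), c (g (k - 1))⟩, ?_, ?_⟩
        · refine arcQ _ _ (gne (k - 1) k (by omega) hk (by omega)) ?_ _ _
          have h1 := gadj (k - 1)
          rwa [show k - 1 + 1 = k by omega] at h1
        · rw [ρcval (k - 1) (by omega), ρz]
          split_ifs <;> omega
    · have ρz : ρ ⟨g k, a⟩ = if k = 0 then n else k := by
        rw [ρeval, if_neg hac, hik]
      by_cases hk0 : k = 0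
      · subst hk0
        refine ⟨⟨g (n - 1), d (g (n - 1))⟩, ?_, ?_⟩
        · exact arcQ _ _ hwrapne hwrapadj _ _
        · rw [ρdval (n-1) (by omega), ρz, if_pos rfl, if_neg (by omega)]
          omega
      · by_cases hk1 : k = 1
        · subst hk1
          refine ⟨x, ?_, ?_⟩
        
          · rw [hxdef]
            exact arcQ _ _ (gne 0 1 (by omega) (by omega) (by omega)) (gadj 0) _ _
          · rw [ρx, ρz, if_neg hk0]
            omega
        · refine ⟨⟨g (k - 1), d (g (k - 1))⟩, ?_, ?_⟩
          · refine arcQ _ _ (gne (k - 1) k (by omega) hk (by omega)) ?_ _ _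
            have h1 := gadj (k - 1)
            rwa [show k - 1 + 1 = k by omega] at h1
          · rw [ρdval (k - 1) (by omega), ρz, if_neg hk0, if_neg (by omega)]
            omega
  -- out-neighbours
  have lemB : ∀ z : (i : Fin t) × β i, z ≠ y →
      ∃ w, (Digr.comp T H).Adj z w ∧ ρ z < ρ w := by
    rintro ⟨i, a⟩ hzy
    obtain ⟨k, hk, rfl⟩ : ∃ k, k < n ∧ g k = i := ⟨idx i, hidx i, hgidx i⟩
    have hik : idx (g k) = k := hidxg k hk
    by_cases hklast : k = n - 1
    · by_cases hac : a = c (g k)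
      · exfalso
        apply hzy
        subst hac
        subst hklast
        rfl
      · have ρz : ρ ⟨g k, a⟩ = k := by
          rw [ρeval, if_neg hac, hik, if_neg (by omega)]
        subst hklast
        refine ⟨⟨g 0, d (g 0)⟩, ?_, ?_⟩
        · exact arcQ _ _ hwrapne hwrapadj _ _
        · rw [ρdval 0 (by omega), ρz, if_pos rfl]
          omega
    · have ρz : ρ ⟨g k, a⟩ ≤ n + k := by
        rw [ρeval, hik]
        split_ifs <;> omega
      refine ⟨⟨g (k + 1), c (g (k + 1))⟩, ?_, ?_⟩
      · exact arcQ _ _ (gne k (k + 1) hk (by omega) (by omega)) (gadj k) _ _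
      · rw [ρcval (k + 1) (by omega), if_neg (by omega)]
        omega
  -- conclusion
  refine ⟨R, x, y, ?_, ?_, ?_, ?_, ?_⟩
  · exact fun a b h => h.1
  · intro v hv
    have h1 : Relation.TransGen (fun a b => ρ a < ρ b) v v :=
      Relation.TransGen.mono (r := R.Adj) (p := fun a b => ρ a < ρ b) (fun a b h => h.2) v v hv
    have key : ∀ p q : (i : Fin t) × β i,
        Relation.TransGen (fun a b => ρ a < ρ b) p q → ρ p < ρ q := by
      intro p q h
      induction h with
      | single h => exact h
      | tail _ h ih => exact lt_trans ih h
    exact absurd (key v v h1) (lt_irrefl _)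
  · intro z h
    have := h.2
    omega
  · intro z h
    have h1 := h.2
    have h2 := ρmax z
    omega
  · have reachx : ∀ m, ∀ z : (i : Fin t) × β i, ρ z = m →
        Relation.ReflTransGen R.Adj x z := by
      intro m
      induction m using Nat.strong_induction_on with
      | _ m ih =>
        intro z hz
        by_cases hzx : z = x
        · subst hzx; exact .refl
        · obtain ⟨w, hw1, hw2⟩ := lemA z hzx
          exact (ih (ρ w) (by omega) w rfl).tail ⟨hw1, hw2⟩
    have reachy : ∀ m, ∀ z : (i : Fin t) × β i, n + n - ρ z = m →
        Relation.ReflTransGen R.Adj z y := by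
      intro m
      induction m using Nat.strong_induction_on with
      | _ m ih =>
        intro z hz
        by_cases hzy : z = y
        · subst hzy; exact .refl
        · obtain ⟨w, hw1, hw2⟩ := lemB z hzy
          have hwb := ρmax w
          exact Relation.ReflTransGen.head ⟨hw1, hw2⟩ (ih (n + n - ρ w) (by omega) w rfl)
    exact fun z => ⟨reachx (ρ z) z rfl, reachy (n + n - ρ z) z rfl⟩
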